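/- arXiv:1601.08046 — 4 statements merged into one kernel-verified Lean document; each statement's English description precedes it below -/
import Mathlib

section
/- Consider the system with T = 1, w₁ = 1/2, W(t) = √t, P(s) = s². Among all pairs (s₁, s₂) ∈ (0,1]² satisfying the real-time constraints t₁ := (1/2)/s₁ ≤ 1 and t₂ := √(t₁)/s₂ ≤ 1, the average power consumption p(s₁,s₂) = (t₁ s₁² + t₂ s₂²)/(t₁ + t₂) is uniquely minimized at s₁ = (√5 − 1)/2 and s₂ = √((√5+1)/4). -/
noncomputable def t1 (s₁ : ℝ) : ℝ := (1 / 2) / s₁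
noncomputable def t2 (s₁ s₂ : ℝ) : ℝ := Real.sqrt (t1 s₁) / s₂
noncomputable def avgPow (s₁ s₂ : ℝ) : ℝ :=
  (t1 s₁ * s₁ ^ 2 + t2 s₁ s₂ * s₂ ^ 2) / (t1 s₁ + t2 s₁ s₂)

set_option maxHeartbeats 1600000 in
theorem stmt_7 :
    ((Real.sqrt 5 - 1) / 2 ∈ Set.Ioc (0:ℝ) 1 ∧
     Real.sqrt ((Real.sqrt 5 + 1) / 4) ∈ Set.Ioc (0:ℝ) 1 ∧
     t1 ((Real.sqrt 5 - 1) / 2) ≤ 1 ∧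
     t2 ((Real.sqrt 5 - 1) / 2) (Real.sqrt ((Real.sqrt 5 + 1) / 4)) ≤ 1) ∧
    ∀ s₁ ∈ Set.Ioc (0:ℝ) 1, ∀ s₂ ∈ Set.Ioc (0:ℝ) 1,
      t1 s₁ ≤ 1 → t2 s₁ s₂ ≤ 1 →
      (s₁, s₂) ≠ ((Real.sqrt 5 - 1) / 2, Real.sqrt ((Real.sqrt 5 + 1) / 4)) →
      avgPow ((Real.sqrt 5 - 1) / 2) (Real.sqrt ((Real.sqrt 5 + 1) / 4)) < avgPow s₁ s₂ := by
  have ha2 : Real.sqrt 5 ^ 2 = 5 := Real.sq_sqrt (by norm_num)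
  set a := Real.sqrt 5 with ha
  have ha_gt : 2 < a := by nlinarith [Real.sqrt_nonneg 5]
  have ha_lt : a < 3 := by nlinarith [Real.sqrt_nonneg 5]
  set c : ℝ := (a - 1) / 2 with hc
  have hc_pos : 0 < c := by rw [hc]; linarith
  have hc_le : c ≤ 1 := by rw [hc]; linarith
  set b : ℝ := Real.sqrt ((a + 1) / 4) with hb
  have hb2 : b ^ 2 = (a + 1) / 4 := Real.sq_sqrt (by linarith)
  have hb_pos : 0 < b := Real.sqrt_pos.mpr (by linarith)
  have hb_le : b ≤ 1 := by nlinarith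
  -- t1 at the optimum
  have ht1c : t1 c = (a + 1) / 4 := by
    rw [t1, hc]
    rw [div_eq_div_iff (by linarith) (by norm_num)]
    nlinarith
  have hsq_t1c : Real.sqrt (t1 c) = b := by rw [ht1c, hb]
  have ht2c : t2 c b = 1 := by
    rw [t2, hsq_t1c, div_self (ne_of_gt hb_pos)]
  -- value at the optimum
  have hval : avgPow c b = c := by
    rw [avgPow, ht2c, ht1c, one_mul]
    rw [div_eq_iff (by nlinarith)]
    rw [hb2, hc]
    nlinarith
  refine ⟨⟨⟨hc_pos, hc_le⟩, ⟨hb_pos, hb_le⟩, by rw [ht1c]; linarith, by rw [ht2c]⟩, ?_⟩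
  intro s₁ hs₁ s₂ hs₂ ht1le ht2le hne
  obtain ⟨hs1p, hs1le⟩ := hs₁
  obtain ⟨hs2p, hs2le⟩ := hs₂
  rw [hval]
  have ht1pos : 0 < t1 s₁ := by rw [t1]; positivity
  set u : ℝ := Real.sqrt (t1 s₁) with hu
  have hu2 : u ^ 2 = t1 s₁ := Real.sq_sqrt ht1pos.le
  have hupos : 0 < u := Real.sqrt_pos.mpr ht1pos
  have hkey : 2 * s₁ * u ^ 2 = 1 := by
    rw [hu2, t1]; field_simp
  have hs2u : u ≤ s₂ := by
    have := ht2le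
    rw [t2, ← hu, div_le_one hs2p] at this
    exact this
  have ht2v : t2 s₁ s₂ = u / s₂ := by rw [t2, ← hu]
  have hdenpos : 0 < t1 s₁ + t2 s₁ s₂ := by
    rw [ht2v]; positivity
  rw [avgPow, lt_div_iff₀ hdenpos]
  have e1 : t1 s₁ + t2 s₁ s₂ = (s₂ + 2 * s₁ * u) / (2 * s₁ * s₂) := by
    rw [ht2v, t1]; field_simp
  have e2 : t1 s₁ * s₁ ^ 2 + t2 s₁ s₂ * s₂ ^ 2
      = (s₁ ^ 2 * s₂ + 2 * s₁ * u * s₂ ^ 2) / (2 * s₁ * s₂) := by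
    rw [ht2v, t1]; field_simp
  rw [e1, e2, ← mul_div_assoc, div_lt_div_iff₀ (by positivity) (by positivity)]
  -- reduce to a polynomial inequality
  have heq : c * (s₂ + 2 * s₁ * u) + (s₂ * (s₁ - c) ^ 2 + 2 * s₁ * (s₂ - u) * (u * s₂ + c))
      = s₁ ^ 2 * s₂ + 2 * s₁ * u * s₂ ^ 2 := by
    rw [hc]
    linear_combination -s₂ * hkey + s₂ / 4 * ha2
  have hmain : c * (s₂ + 2 * s₁ * u) < s₁ ^ 2 * s₂ + 2 * s₁ * u * s₂ ^ 2 := by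
    by_cases h1 : s₁ = c
    · have h2 : s₂ ≠ b := by
        intro h2; exact hne (by rw [h1, h2])
      have hub : u = b := by rw [hu, h1, hsq_t1c]
      have hlt : u < s₂ := lt_of_le_of_ne hs2u (by rw [hub]; exact fun h => h2 h.symm)
      have t2pos : 0 < 2 * s₁ * (s₂ - u) * (u * s₂ + c) :=
        mul_pos (mul_pos (by linarith) (by linarith))
          (by have := mul_pos hupos hs2p; linarith)
      have t1nn : 0 ≤ s₂ * (s₁ - c) ^ 2 := mul_nonneg hs2p.le (sq_nonneg _)
      linarith
    · have hd : s₁ - c ≠ 0 := sub_ne_zero.mpr h1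
      have t1pos : 0 < s₂ * (s₁ - c) ^ 2 :=
        mul_pos hs2p (by positivity)
      have t2nn : 0 ≤ 2 * s₁ * (s₂ - u) * (u * s₂ + c) :=
        mul_nonneg (mul_nonneg (by linarith) (by linarith))
          (by have := mul_pos hupos hs2p; linarith)
      linarith
  nlinarith [hmain, mul_pos (mul_pos hs1p hs2p) hs2p]
end

section
/- For the toy example with w₁ = 1/2 and W(t) = √t, P(s) = s², fixing t₂ = √(t₁)/s₂: for any fixed s₁, the function s₂ ↦ ((1/(2s₁))s₁² + (√(1/(2s₁))/s₂)s₂²) / (1/(2s₁) + √(1/(2s₁))/s₂) is nondecreasing in s₂ on (0,1]. -/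
open Set

theorem monotoneOn_add_mul_div_add_div {p q a b : ℝ} (hp : 0 ≤ p) (hq : 0 ≤ q) (ha : 0 ≤ a)
    (hb : 0 < b) : MonotoneOn (fun s => (p + q * s) / (a + b / s)) (Ioi 0) := by
  intro x (hx : 0 < x) y (hy : 0 < y) hxy
  exact div_le_div₀ (by positivity) (by gcongr) (by positivity) (by gcongr)

theorem stmt_8 (s₁ : ℝ) (hs₁ : 0 < s₁) :
    MonotoneOn (fun s₂ : ℝ =>
      ((1 / (2 * s₁)) * s₁ ^ 2 + (Real.sqrt (1 / (2 * s₁)) / s₂) * s₂ ^ 2) /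
      (1 / (2 * s₁) + Real.sqrt (1 / (2 * s₁)) / s₂)) (Set.Ioc (0:ℝ) 1) := by
  have ha : 0 < 1 / (2 * s₁) := by positivity
  have hmono := monotoneOn_add_mul_div_add_div (p := 1 / (2 * s₁) * s₁ ^ 2)
    (q := Real.sqrt (1 / (2 * s₁))) (by positivity) (Real.sqrt_nonneg _) ha.le
    (Real.sqrt_pos.mpr ha)
  refine (hmono.mono Ioc_subset_Ioi_self).congr fun s hs => ?_
  have hs : s ≠ 0 := hs.1.ne'
  field_simp
end

section
/- Let W : (0,T] → ℝ be nondecreasing with W(t) ≥ w_base > 0 for all t, and w₁ ≥ w_base. Define R_o = {t : 0 < t < w₁ and ∀ t' ∈ (t,T], W(t') > t} and R_c = {t : 0 < t ≤ w₁ and ∀ t' ∈ [t,T], W(t') ≥ t}, and R = (⋂_{t∈R_o} (t,T]) ∩ (⋂_{t∈R_c} [t,T]). Then any delay occurring in a real-time feasible execution trace (defined by speeds sᵢ ∈ (0,1], delays tᵢ = wᵢ/sᵢ ≤ T, w_{i+1} = W(tᵢ), with initial workload w₁) belongs to R. -/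
theorem stmt_17 (T : ℝ) (hT : 0 < T) (W : ℝ → ℝ)
    (hmono : MonotoneOn W (Set.Ioc (0:ℝ) T))
    (wbase : ℝ) (hwbase : 0 < wbase)
    (hWlb : ∀ x ∈ Set.Ioc (0:ℝ) T, wbase ≤ W x)
    (w₁ : ℝ) (hw₁ : wbase ≤ w₁)
    (Ro Rc : Set ℝ)
    (hRo : Ro = {u : ℝ | 0 < u ∧ u < w₁ ∧ ∀ t' ∈ Set.Ioc u T, u < W t'})
    (hRc : Rc = {u : ℝ | 0 < u ∧ u ≤ w₁ ∧ ∀ t' ∈ Set.Icc u T, u ≤ W t'})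
    (n : ℕ) (s w t : ℕ → ℝ)
    (hw0 : w 0 = w₁) (ht : ∀ i, t i = w i / s i)
    (hwrec : ∀ i, i + 1 < n → w (i + 1) = W (t i))
    (hs : ∀ i < n, s i ∈ Set.Ioc (0:ℝ) 1)
    (hfeas : ∀ i < n, t i ≤ T) :
    ∀ i < n, (∀ u ∈ Ro, u < t i ∧ t i ≤ T) ∧ (∀ u ∈ Rc, u ≤ t i ∧ t i ≤ T) := by
  -- wbase ≤ w i for all i < n
  have hwlb : ∀ i < n, wbase ≤ w i := by
    intro i
    induction i with
    | zero => intro _; rw [hw0]; exact hw₁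
    | succ i ih =>
      intro h
      have hi : i < n := Nat.lt_of_succ_lt h
      have hwi := ih hi
      have hspos := (hs i hi).1
      have htpos : 0 < t i := by
        rw [ht i]; exact div_pos (lt_of_lt_of_le hwbase hwi) hspos
      rw [hwrec i h]
      exact hWlb (t i) ⟨htpos, hfeas i hi⟩
  -- w i ≤ t i for all i < n
  have hge : ∀ i < n, w i ≤ t i := by
    intro i hi
    have hwi := hwlb i hi
    have hspos := (hs i hi).1
    rw [ht i, le_div_iff₀ hspos]
    exact mul_le_of_le_one_right (le_trans hwbase.le hwi) (hs i hi).2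
  intro i
  induction i with
  | zero =>
    intro h
    have h0 : w₁ ≤ t 0 := hw0 ▸ hge 0 h
    constructor
    · intro u hu
      rw [hRo] at hu
      exact ⟨lt_of_lt_of_le hu.2.1 h0, hfeas 0 h⟩
    · intro u hu
      rw [hRc] at hu
      exact ⟨le_trans hu.2.1 h0, hfeas 0 h⟩
  | succ i ih =>
    intro h
    have hi : i < n := Nat.lt_of_succ_lt h
    obtain ⟨iho, ihc⟩ := ih hi
    have hWle : W (t i) ≤ t (i + 1) := hwrec i h ▸ hge (i + 1) h
    constructor
    · intro u hu
      have h1 := iho u hu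
      rw [hRo] at hu
      exact ⟨lt_of_lt_of_le (hu.2.2 (t i) ⟨h1.1, h1.2⟩) hWle, hfeas _ h⟩
    · intro u hu
      have h1 := ihc u hu
      rw [hRc] at hu
      exact ⟨le_trans (hu.2.2 (t i) ⟨h1.1, h1.2⟩) hWle, hfeas _ h⟩
end

section
/- Let W : (0,T] → ℝ be nondecreasing and suppose the set R̄ of reachable delays (delays appearing in some real-time feasible execution trace) is nonempty and satisfies: (i) t ∈ R̄ and t ≤ t' ≤ T implies t' ∈ R̄, and (ii) [w₁,T] ⊆ R̄. Then if for some t ∈ R̄ we have W(t) ∈ (0,T], it follows that W(t) ∈ R̄. -/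
/-- `x` is a reachable delay: some real-time feasible execution trace has an
iteration whose delay equals `x`. -/
def Reachable (W : ℝ → ℝ) (T w₁ : ℝ) (x : ℝ) : Prop :=
  ∃ n : ℕ, ∃ s w t : ℕ → ℝ,
    w 0 = w₁ ∧ (∀ i, t i = w i / s i) ∧
    (∀ i, i + 1 < n → w (i + 1) = W (t i)) ∧
    (∀ i < n, s i ∈ Set.Ioc (0:ℝ) 1) ∧
    (∀ i < n, t i ≤ T) ∧
    ∃ j < n, t j = x

theorem stmt_18 (T : ℝ) (hT : 0 < T) (W : ℝ → ℝ)
    (hmono : MonotoneOn W (Set.Ioc (0:ℝ) T))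
    (w₁ : ℝ) (hw₁ : w₁ ∈ Set.Ioc (0:ℝ) T)
    (hne : ∃ x, Reachable W T w₁ x)
    (hup : ∀ x, Reachable W T w₁ x → ∀ x', x ≤ x' → x' ≤ T → Reachable W T w₁ x')
    (hIcc : ∀ x ∈ Set.Icc w₁ T, Reachable W T w₁ x) :
    ∀ x, Reachable W T w₁ x → W x ∈ Set.Ioc (0:ℝ) T → Reachable W T w₁ (W x) := by
  rintro x ⟨n, s, w, t, hw0, ht, hrec, hs, htT, j, hj, htj⟩ hWx
  refine ⟨j + 2,
    (fun i => if i ≤ j then s i else 1),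
    (fun i => if i ≤ j then w i else W x),
    (fun i => if i ≤ j then t i else W x), ?_, ?_, ?_, ?_, ?_, j + 1, by omega, by simp⟩
  · simpa using hw0
  · intro i
    by_cases h : i ≤ j <;> simp [h, ht i]
  · intro i hi
    rcases lt_or_eq_of_le (by omega : i ≤ j) with h | h
    · have h1 : i + 1 ≤ j := h
      simp only [h1, h.le, if_pos]
      exact hrec i (by omega)
    · subst h
      simp [htj]
  · intro i hi
    by_cases h : i ≤ j
    · simpa [h] using hs i (by omega)
    · simp [h]
  · intro i hi
    by_cases h : i ≤ j
    · simpa [h] using htT i (by omega)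
    · simpa [h] using hWx.2
end
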